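/- arXiv:1806.05869 — 4 statements merged into one kernel-verified Lean document; each statement's English description precedes it below -/
import Mathlib

section
/- Let p be a prime and let x be a real number with |x| ≤ 2. Then the series ∑_{r=0}^∞ (r+1)·p^{−r/2}·X_r(x) converges and its sum equals (p − 1)/(√p + 1/√p − x)². -/
/-- `X ℓ x = U ℓ (x/2)`, the Chebyshev polynomial normalized by
`X ℓ (2 cos θ) = sin ((ℓ+1) θ) / sin θ`. -/
noncomputable def chebX (ℓ : ℕ) (x : ℝ) : ℝ :=
  (Polynomial.Chebyshev.U ℝ (ℓ : ℤ)).eval (x / 2)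

/-!
Put `t = p^{-1/2}`, so `|t| < 1` and the claimed sum is `(1 - t²) / (1 - x t + t²)²`.
The identity `X_r² + X_{r+1}² - x X_r X_{r+1} = 1` forces `|X_r| ≤ r + 1` on `[-2, 2]`, so both
`∑ t^r X_r` and `∑ (r+1) t^r X_r` converge. Shifting a convergent series by two terms turns the
recurrence `X_{r+2} = x X_{r+1} - X_r` into the linear equation `(1 - x t + t²) ∑ t^r X_r = 1`.
The weighted terms `(r+1) t^r X_r` satisfy the same recurrence up to a forcing term
`x t · t^{r+1} X_{r+1} - 2 t² · t^r X_r`, whose sum is known from the first series; solving the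
resulting linear equation gives the formula.
-/

open Polynomial Polynomial.Chebyshev

theorem HasSum.sub_sub_eq_of_recurrence {R : Type*} [Ring R] [TopologicalSpace R]
    [IsTopologicalRing R] [T2Space R] {u v : ℕ → R} {S V : R} (a b : R)
    (hu : HasSum u S) (hv : HasSum v V) (h : ∀ n, u (n + 2) = a * u (n + 1) + b * u n + v n) :
    S - u 0 - u 1 = a * (S - u 0) + b * S + V := by
  have h2 : HasSum (fun n => a * u (n + 1) + b * u n + v n) (S - u 0 - u 1) := by
    simpa [← h, Finset.sum_range_succ, sub_sub] using (hasSum_nat_add_iff' 2).mpr hu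
  have h1 : HasSum (fun n => u (n + 1)) (S - u 0) := by
    simpa using (hasSum_nat_add_iff' 1).mpr hu
  exact h2.unique (((h1.mul_left a).add (hu.mul_left b)).add hv)

lemma chebX_eq_eval_S (r : ℕ) (x : ℝ) : chebX r x = (S ℝ r).eval x := by
  rw [chebX, S_eq_U_comp_half_mul_X, eval_comp]
  simp [div_eq_inv_mul]

lemma chebX_zero (x : ℝ) : chebX 0 x = 1 := by
  simp [chebX_eq_eval_S]

lemma chebX_one (x : ℝ) : chebX 1 x = x := by
  simp [chebX_eq_eval_S]

lemma chebX_add_two (r : ℕ) (x : ℝ) : chebX (r + 2) x = x * chebX (r + 1) x - chebX r x := by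
  simp [chebX_eq_eval_S]

lemma chebX_sq_add_chebX_sq (r : ℕ) (x : ℝ) :
    chebX r x ^ 2 + chebX (r + 1) x ^ 2 - x * chebX r x * chebX (r + 1) x = 1 := by
  simpa [chebX_eq_eval_S] using congr_arg (eval x) (S_sq_add_S_sq ℝ r)

lemma abs_chebX_le {x : ℝ} (hx : |x| ≤ 2) (r : ℕ) : |chebX r x| ≤ r + 1 := by
  induction r with
  | zero => simp [chebX_zero]
  | succ r ih =>
    have hx2 : x ^ 2 ≤ 4 := by nlinarith [sq_abs x, abs_nonneg x]
    have hdev : |chebX (r + 1) x - x / 2 * chebX r x| ≤ 1 := by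
      -- the square is `1 - (1 - x² / 4) X_r²`
      rw [← sq_le_one_iff_abs_le_one]
      nlinarith [chebX_sq_add_chebX_sq r x, sq_nonneg (chebX r x)]
    have hhalf : |x / 2 * chebX r x| ≤ |chebX r x| := by
      rw [abs_mul, abs_div, abs_two]
      exact mul_le_of_le_one_left (abs_nonneg _) (by linarith)
    push_cast
    linarith [abs_sub_abs_le_abs_sub (chebX (r + 1) x) (x / 2 * chebX r x)]

section GeneratingFunction

variable {x t : ℝ}

lemma one_sub_mul_add_sq_pos (hx : |x| ≤ 2) (ht : |t| < 1) : 0 < 1 - x * t + t ^ 2 := by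
  have hxt : x * t ≤ 2 * |t| :=
    (le_abs_self _).trans (by rw [abs_mul]; exact mul_le_mul_of_nonneg_right hx (abs_nonneg t))
  nlinarith [sq_abs t, pow_pos (sub_pos.mpr ht) 2]

lemma summable_succ_mul_pow_mul_chebX (hx : |x| ≤ 2) (ht : |t| < 1) :
    Summable fun r : ℕ => ((r : ℝ) + 1) * t ^ r * chebX r x := by
  refine .of_norm_bounded
    (summable_descFactorial_mul_geometric_of_norm_lt_one 2 (r := |t|) (by simpa using ht))
    fun r => ?_
  have hdesc : ((r + 2).descFactorial 2 : ℝ) = (r + 2) * (r + 1) := by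
    simp [Nat.descFactorial]; ring
  rw [Real.norm_eq_abs, abs_mul, abs_mul, abs_pow, hdesc,
    abs_of_nonneg (by positivity : (0 : ℝ) ≤ r + 1)]
  calc ((r : ℝ) + 1) * |t| ^ r * |chebX r x| ≤ (r + 1) * |t| ^ r * (r + 1) := by
        gcongr; exact abs_chebX_le hx r
    _ ≤ (r + 2) * (r + 1) * |t| ^ r := by nlinarith [pow_nonneg (abs_nonneg t) r]

lemma summable_pow_mul_chebX (hx : |x| ≤ 2) (ht : |t| < 1) :
    Summable fun r : ℕ => t ^ r * chebX r x := by
  refine .of_norm_bounded (summable_succ_mul_pow_mul_chebX hx ht).norm fun r => ?_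
  rw [mul_assoc, norm_mul (_ + 1)]
  exact le_mul_of_one_le_left (norm_nonneg _) (by
    rw [Real.norm_eq_abs, abs_of_nonneg (by positivity)]; exact le_add_of_nonneg_left r.cast_nonneg)

theorem hasSum_pow_mul_chebX (hx : |x| ≤ 2) (ht : |t| < 1) :
    HasSum (fun r : ℕ => t ^ r * chebX r x) (1 - x * t + t ^ 2)⁻¹ := by
  obtain ⟨H, hH⟩ := summable_pow_mul_chebX hx ht
  have hrel := hH.sub_sub_eq_of_recurrence (x * t) (-t ^ 2) hasSum_zero fun r => by
    rw [chebX_add_two]; ring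
  simp only [pow_zero, pow_one, chebX_zero, chebX_one] at hrel
  convert hH
  rw [inv_eq_of_mul_eq_one_left]
  linear_combination hrel

theorem hasSum_succ_mul_pow_mul_chebX (hx : |x| ≤ 2) (ht : |t| < 1) :
    HasSum (fun r : ℕ => ((r : ℝ) + 1) * t ^ r * chebX r x)
      ((1 - t ^ 2) / (1 - x * t + t ^ 2) ^ 2) := by
  obtain ⟨G, hG⟩ := summable_succ_mul_pow_mul_chebX hx ht
  have hD := one_sub_mul_add_sq_pos hx ht
  have hH := hasSum_pow_mul_chebX hx ht
  have hH₁ : HasSum (fun r : ℕ => t ^ (r + 1) * chebX (r + 1) x)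
      ((1 - x * t + t ^ 2)⁻¹ - 1) := by
    simpa [chebX_zero] using (hasSum_nat_add_iff' 1).mpr hH
  have hrel := hG.sub_sub_eq_of_recurrence (x * t) (-t ^ 2)
    ((hH₁.mul_left (x * t)).sub (hH.mul_left (2 * t ^ 2))) fun r => by
      push_cast; rw [chebX_add_two]; ring
  push_cast [pow_zero, pow_one, chebX_zero, chebX_one] at hrel
  have hinv : (1 - x * t + t ^ 2) * (1 - x * t + t ^ 2)⁻¹ = 1 := mul_inv_cancel₀ hD.ne'
  convert hG
  rw [div_eq_iff (by positivity)]
  linear_combination (-(1 - x * t + t ^ 2)) * hrel - (x * t - 2 * t ^ 2) * hinv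

end GeneratingFunction

/-- For a prime `p` and `|x| ≤ 2`, the series `∑_{r≥0} (r+1) p^{-r/2} X_r(x)`
converges, with sum `(p - 1) / (√p + 1/√p - x)²`. -/
theorem tsum_chebX_weighted (p : ℕ) (hp : p.Prime) (x : ℝ) (hx : |x| ≤ 2) :
    Summable (fun r : ℕ => ((r : ℝ) + 1) * (p : ℝ) ^ (-(r : ℝ) / 2) * chebX r x) ∧
    ∑' r : ℕ, ((r : ℝ) + 1) * (p : ℝ) ^ (-(r : ℝ) / 2) * chebX r x =
      ((p : ℝ) - 1) / (Real.sqrt p + 1 / Real.sqrt p - x) ^ 2 := by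
  have hs : 1 < Real.sqrt p := Real.lt_sqrt_of_sq_lt (by simpa using hp.one_lt)
  have ht : |(Real.sqrt p)⁻¹| < 1 := by
    rw [abs_inv, abs_of_pos (by linarith)]; exact inv_lt_one_of_one_lt₀ hs
  have hpow (r : ℕ) : (p : ℝ) ^ (-(r : ℝ) / 2) = (Real.sqrt p)⁻¹ ^ r := by
    rw [Real.sqrt_eq_rpow, ← Real.rpow_natCast, ← Real.rpow_neg_one,
      ← Real.rpow_mul p.cast_nonneg, ← Real.rpow_mul p.cast_nonneg]
    ring_nf
  have h := hasSum_succ_mul_pow_mul_chebX hx ht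
  simp_rw [hpow]
  refine ⟨h.summable, h.tsum_eq.trans ?_⟩
  rw [show (p : ℝ) - 1 = Real.sqrt p ^ 2 - 1 by rw [Real.sq_sqrt p.cast_nonneg]]
  field_simp
  ring
end

section
/- Let p be a prime and r ≥ 0 an integer. Then ∫_ℝ X_r(x) · (p − 1)/(√p + 1/√p − x)² dμ_∞(x) = (r + 1)·p^{−r/2}. -/
open MeasureTheory

/-- The Sato–Tate measure on `ℝ`: density `(1/π) √(1 - x²/4)` on `[-2, 2]`,
zero outside. -/
noncomputable def satoTate : Measure ℝ :=
  volume.withDensity (fun x => ENNReal.ofReal ((1 / Real.pi) * Real.sqrt (1 - x ^ 2 / 4)))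

/-!
Substituting `x = 2 cos θ` and writing `t = p^{-1/2}`, the identities
`X_r (2 cos θ) sin θ = sin ((r + 1) θ)` and `√p + 1/√p - 2 cos θ = √p |1 - t e^{iθ}|²` turn the
integral into `(2/π) (1 - t²) ∫₀^π sin θ sin ((r + 1) θ) / |1 - t e^{iθ}|⁴ dθ`. Integrating by parts
against `d/dθ |1 - t e^{iθ}|⁻² = -2 t sin θ / |1 - t e^{iθ}|⁴` reduces this to the Poisson-kernel
moment `∫₀^π cos (k θ) / |1 - t e^{iθ}|² dθ = π t^k / (1 - t²)` for `k = r + 1`, which follows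
from the three-term recurrence of `cos (k θ)` and an arctangent antiderivative for `k = 0`.
-/

open Real intervalIntegral Set

lemma continuous_chebX (r : ℕ) : Continuous (chebX r) := by
  unfold chebX; fun_prop

lemma chebX_two_mul_cos_mul_sin (r : ℕ) (θ : ℝ) :
    chebX r (2 * cos θ) * sin θ = sin ((r + 1) * θ) := by
  simp [chebX]

lemma integral_satoTate_eq_intervalIntegral (f : ℝ → ℝ) :
    ∫ x, f x ∂satoTate = ∫ x in -2..2, 1 / π * √(1 - x ^ 2 / 4) * f x := by
  rw [satoTate, integral_withDensity_eq_integral_toReal_smul (by fun_prop)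
    (ae_of_all _ fun _ ↦ ENNReal.ofReal_lt_top)]
  have hdensity x : (ENNReal.ofReal (1 / π * √(1 - x ^ 2 / 4))).toReal = 1 / π * √(1 - x ^ 2 / 4) :=
    ENNReal.toReal_ofReal (by positivity)
  simp only [hdensity, smul_eq_mul]
  rw [intervalIntegral.integral_of_le (by norm_num), ← integral_Icc_eq_integral_Ioc,
    setIntegral_eq_integral_of_forall_compl_eq_zero]
  intro x hx
  have : 1 - x ^ 2 / 4 ≤ 0 := by
    simp only [mem_Icc, not_and_or, not_le] at hx
    rcases hx with h | h <;> nlinarith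
  simp [sqrt_eq_zero_of_nonpos this]

lemma integral_satoTate_eq_integral_cos {f : ℝ → ℝ} (hf : ContinuousOn f (Icc (-2) 2)) :
    ∫ x, f x ∂satoTate = 2 / π * ∫ θ in 0..π, f (2 * cos θ) * sin θ ^ 2 := by
  have hcos : MapsTo (fun θ ↦ 2 * cos θ) univ (Icc (-2) 2) := fun θ _ ↦
    ⟨by linarith [neg_one_le_cos θ], by linarith [cos_le_one θ]⟩
  have hsub := integral_comp_mul_deriv' (a := 0) (b := π) (f := fun θ ↦ 2 * cos θ)
    (f' := fun θ ↦ -(2 * sin θ)) (g := fun x ↦ 1 / π * √(1 - x ^ 2 / 4) * f x)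
    (fun θ _ ↦ by simpa using (hasDerivAt_cos θ).const_mul 2) (by fun_prop)
    ((by fun_prop : Continuous fun x : ℝ ↦ 1 / π * √(1 - x ^ 2 / 4)).continuousOn.mul hf |>.mono
      (hcos.mono_left (subset_univ _)).image_subset)
  simp only [cos_zero, cos_pi, mul_one, mul_neg] at hsub
  rw [integral_satoTate_eq_intervalIntegral, integral_symm, ← hsub, ← intervalIntegral.integral_neg,
    ← intervalIntegral.integral_const_mul]
  refine integral_congr fun θ hθ ↦ ?_
  rw [uIcc_of_le pi_pos.le] at hθ
  have hsqrt : √(1 - (2 * cos θ) ^ 2 / 4) = sin θ := by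
    rw [show 1 - (2 * cos θ) ^ 2 / 4 = sin θ ^ 2 by nlinarith [sin_sq_add_cos_sq θ],
      sqrt_sq (sin_nonneg_of_nonneg_of_le_pi hθ.1 hθ.2)]
  simp only [Function.comp_apply, hsqrt]
  ring

/-- `|1 - t e^{iθ}|²`. -/
noncomputable def poissonDenom (t θ : ℝ) : ℝ := 1 - 2 * t * cos θ + t ^ 2

section Poisson

variable {t : ℝ}

lemma poissonDenom_pos (ht : |t| < 1) (θ : ℝ) : 0 < poissonDenom t θ := by
  obtain ⟨h₁, h₂⟩ := abs_lt.mp ht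
  have := neg_one_le_cos θ
  have := cos_le_one θ
  unfold poissonDenom
  rcases le_total 0 t with h | h <;> nlinarith

@[fun_prop]
lemma continuous_poissonDenom (t : ℝ) : Continuous (poissonDenom t) := by
  unfold poissonDenom; fun_prop

lemma hasDerivAt_poissonDenom (t θ : ℝ) :
    HasDerivAt (poissonDenom t) (2 * t * sin θ) θ := by
  have := (((hasDerivAt_cos θ).const_mul (2 * t)).const_sub 1).add_const (t ^ 2)
  simp only [mul_neg, neg_neg] at this
  exact this

lemma intervalIntegrable_div_poissonDenom (ht : |t| < 1) {f : ℝ → ℝ} (hf : Continuous f)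
    (a b : ℝ) : IntervalIntegrable (fun θ ↦ f θ / poissonDenom t θ) volume a b :=
  (hf.div (continuous_poissonDenom t) fun θ ↦ (poissonDenom_pos ht θ).ne').intervalIntegrable a b

/-- `(1 - t²) / poissonDenom t θ = 1 + 2 d/dθ arctan (t sin θ / (1 - t cos θ))`, the arctangent
being `-arg (1 - t e^{iθ})`. -/
lemma integral_inv_poissonDenom (ht : |t| < 1) :
    ∫ θ in 0..π, (poissonDenom t θ)⁻¹ = π / (1 - t ^ 2) := by
  obtain ⟨h₁, h₂⟩ := abs_lt.mp ht
  have ht2 : 1 - t ^ 2 ≠ 0 := by nlinarith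
  have hden : ∀ θ, 0 < 1 - t * cos θ := fun θ ↦ by
    have := neg_one_le_cos θ; have := cos_le_one θ
    rcases le_total 0 t with h | h <;> nlinarith
  have hderiv : ∀ θ ∈ uIcc 0 π, HasDerivAt
      (fun θ ↦ (θ + 2 * arctan (t * sin θ / (1 - t * cos θ))) / (1 - t ^ 2))
      (poissonDenom t θ)⁻¹ θ := by
    intro θ _
    have hq : HasDerivAt (fun θ ↦ t * sin θ / (1 - t * cos θ))
        ((t * cos θ * (1 - t * cos θ) - t * sin θ * (t * sin θ)) / (1 - t * cos θ) ^ 2) θ := by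
      simpa using ((hasDerivAt_sin θ).const_mul t).fun_div
        (((hasDerivAt_cos θ).const_mul t).const_sub 1) (hden θ).ne'
    refine (((hasDerivAt_id' θ).add (hq.arctan.const_mul 2)).div_const _).congr_deriv ?_
    have hD := poissonDenom_pos ht θ
    have hc := hden θ
    have hsin := sin_sq_add_cos_sq θ
    simp only [poissonDenom] at hD ⊢
    field_simp
    linear_combination (-t ^ 2 * (2 - 2 * t * cos θ)) * hsin
  rw [integral_eq_sub_of_hasDerivAt hderiv (((continuous_poissonDenom t).inv₀
    fun θ ↦ (poissonDenom_pos ht θ).ne').intervalIntegrable 0 π)]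
  simp [field]

lemma integral_cos_nat_succ_mul (k : ℕ) : ∫ θ in 0..π, cos ((k + 1) * θ) = 0 := by
  rw [integral_comp_mul_left (fun θ ↦ cos θ) (by positivity), integral_cos]
  have := sin_nat_mul_pi (k + 1)
  push_cast at this
  simp [this]

/-- From `2 cos θ cos (a θ) = cos ((a + 1) θ) + cos ((a - 1) θ)` and
`2 t cos θ = 1 + t² - poissonDenom t θ`. -/
lemma integral_cos_mul_div_poissonDenom_recurrence (ht : |t| < 1) (a : ℝ) :
    t * ((∫ θ in 0..π, cos ((a + 1) * θ) / poissonDenom t θ) +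
        ∫ θ in 0..π, cos ((a - 1) * θ) / poissonDenom t θ) =
      (1 + t ^ 2) * (∫ θ in 0..π, cos (a * θ) / poissonDenom t θ) -
        ∫ θ in 0..π, cos (a * θ) := by
  have hpt θ : t * (cos ((a + 1) * θ) / poissonDenom t θ + cos ((a - 1) * θ) / poissonDenom t θ)
      = (1 + t ^ 2) * (cos (a * θ) / poissonDenom t θ) - cos (a * θ) := by
    have hD := (poissonDenom_pos ht θ).ne'
    rw [add_mul, sub_mul, cos_add, cos_sub]
    field_simp
    simp only [poissonDenom]
    ring
  have hi : ∀ b : ℝ, IntervalIntegrable (fun θ ↦ cos (b * θ) / poissonDenom t θ) volume 0 π :=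
    fun b ↦ intervalIntegrable_div_poissonDenom ht (by fun_prop) 0 π
  rw [← integral_add (hi _) (hi _), ← intervalIntegral.integral_const_mul,
    ← intervalIntegral.integral_const_mul,
    ← intervalIntegral.integral_sub ((hi a).const_mul _)
      ((by fun_prop : Continuous fun θ ↦ cos (a * θ)).intervalIntegrable 0 π)]
  exact integral_congr fun θ _ ↦ hpt θ

lemma integral_cos_nat_mul_div_poissonDenom (ht₀ : 0 < t) (ht₁ : t < 1) (k : ℕ) :
    ∫ θ in 0..π, cos (k * θ) / poissonDenom t θ = π * t ^ k / (1 - t ^ 2) := by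
  have ht : |t| < 1 := abs_lt.mpr ⟨by linarith, ht₁⟩
  have ht2 : 1 - t ^ 2 ≠ 0 := by nlinarith
  induction k using Nat.twoStepInduction with
  | zero => simpa using integral_inv_poissonDenom ht
  | one =>
    have h := integral_cos_mul_div_poissonDenom_recurrence ht 0
    simp only [zero_add, zero_sub, neg_mul, one_mul, cos_neg, zero_mul, cos_zero, one_div,
      integral_one, sub_zero, integral_inv_poissonDenom ht] at h
    simp only [Nat.cast_one, one_mul, pow_one]
    field_simp at h
    rw [eq_div_iff ht2]
    apply mul_left_cancel₀ (mul_ne_zero two_ne_zero ht₀.ne')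
    linear_combination h
  | more n ih₀ ih₁ =>
    have h := integral_cos_mul_div_poissonDenom_recurrence ht (n + 1)
    rw [integral_cos_nat_succ_mul, add_sub_cancel_right] at h
    push_cast at ih₁ ⊢
    rw [show (n : ℝ) + 1 + 1 = n + 2 by ring, ih₀, ih₁] at h
    field_simp at h ⊢
    apply mul_left_cancel₀ ht₀.ne'
    linear_combination h

lemma integral_sin_mul_sin_div_poissonDenom_sq (ht₀ : 0 < t) (ht₁ : t < 1) (r : ℕ) :
    ∫ θ in 0..π, sin θ * sin ((r + 1) * θ) / poissonDenom t θ ^ 2 =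
      (r + 1) * π * t ^ r / (2 * (1 - t ^ 2)) := by
  have ht : |t| < 1 := abs_lt.mpr ⟨by linarith, ht₁⟩
  have hD θ := (poissonDenom_pos ht θ).ne'
  have hu θ : HasDerivAt (fun θ ↦ sin ((r + 1) * θ)) ((r + 1) * cos ((r + 1) * θ)) θ := by
    simpa [mul_comm] using ((hasDerivAt_id' θ).const_mul ((r : ℝ) + 1)).sin
  have hv θ : HasDerivAt (fun θ ↦ (poissonDenom t θ)⁻¹)
      (-(2 * t * sin θ) / poissonDenom t θ ^ 2) θ :=
    (hasDerivAt_poissonDenom t θ).inv (hD θ)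
  have hv' : Continuous fun θ ↦ -(2 * t * sin θ) / poissonDenom t θ ^ 2 :=
    (by fun_prop : Continuous _).div (by fun_prop) fun θ ↦ pow_ne_zero 2 (hD θ)
  have hparts := intervalIntegral.integral_mul_deriv_eq_deriv_mul (fun θ _ ↦ hu θ)
    (fun θ _ ↦ hv θ) ((by fun_prop : Continuous _).intervalIntegrable 0 π)
    (hv'.intervalIntegrable 0 π)
  have hsin : sin ((r + 1) * π) = 0 := by
    simpa using sin_nat_mul_pi (r + 1)
  have hJ := integral_cos_nat_mul_div_poissonDenom ht₀ ht₁ (r + 1)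
  push_cast at hJ
  calc ∫ θ in 0..π, sin θ * sin ((r + 1) * θ) / poissonDenom t θ ^ 2
      = -(2 * t)⁻¹ *
          ∫ θ in 0..π, sin ((r + 1) * θ) * (-(2 * t * sin θ) / poissonDenom t θ ^ 2) := by
        rw [← intervalIntegral.integral_const_mul]
        refine integral_congr fun θ _ ↦ ?_
        field_simp
    _ = (2 * t)⁻¹ * (r + 1) * ∫ θ in 0..π, cos ((r + 1) * θ) / poissonDenom t θ := by
        rw [hparts, hsin, mul_assoc, ← intervalIntegral.integral_const_mul]
        simp [div_eq_mul_inv, mul_assoc]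
    _ = (r + 1) * π * t ^ r / (2 * (1 - t ^ 2)) := by
        rw [hJ]
        field_simp
        ring

end Poisson

theorem integral_chebX_mul_satoTate {t : ℝ} (ht₀ : 0 < t) (ht₁ : t < 1) (r : ℕ) :
    ∫ x, chebX r x * ((1 - t ^ 2) / (1 - t * x + t ^ 2) ^ 2) ∂satoTate = (r + 1) * t ^ r := by
  have hcont : ContinuousOn (fun x ↦ chebX r x * ((1 - t ^ 2) / (1 - t * x + t ^ 2) ^ 2))
      (Icc (-2) 2) := by
    refine (continuous_chebX r).continuousOn.mul (continuousOn_const.div (by fun_prop) ?_)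
    intro x hx
    have : 0 < 1 - t * x + t ^ 2 := by nlinarith [hx.2]
    positivity
  have hpt θ : chebX r (2 * cos θ) * ((1 - t ^ 2) / (1 - t * (2 * cos θ) + t ^ 2) ^ 2) * sin θ ^ 2 =
      (1 - t ^ 2) * (sin θ * sin ((r + 1) * θ) / poissonDenom t θ ^ 2) := by
    rw [← chebX_two_mul_cos_mul_sin, poissonDenom]
    ring
  have ht2 : 1 - t ^ 2 ≠ 0 := by nlinarith
  simp_rw [integral_satoTate_eq_integral_cos hcont, hpt, intervalIntegral.integral_const_mul,
    integral_sin_mul_sin_div_poissonDenom_sq ht₀ ht₁]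
  field_simp

/-- For a prime `p` and `r ≥ 0`, the integral of `X_r` against the measure
`(p-1)/(√p + 1/√p - x)² dμ_∞(x)` (the measure `η_p^χ` when `χ(p) = 1`)
equals `(r+1) p^{-r/2}`. -/
theorem integral_chebX_etaPlus (p : ℕ) (hp : p.Prime) (r : ℕ) :
    ∫ x, chebX r x * (((p : ℝ) - 1) / (Real.sqrt p + 1 / Real.sqrt p - x) ^ 2) ∂satoTate =
      ((r : ℝ) + 1) * (p : ℝ) ^ (-(r : ℝ) / 2) := by
  have hp1 : (1 : ℝ) < p := by exact_mod_cast hp.one_lt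
  set t := (√(p : ℝ))⁻¹ with ht
  have ht₀ : 0 < t := by positivity
  have ht₁ : t < 1 := inv_lt_one_of_one_lt₀ (lt_sqrt_of_sq_lt (by simpa using hp1))
  have hsq : √(p : ℝ) ^ 2 = p := sq_sqrt (by positivity)
  have hfactor x : √(p : ℝ) + 1 / √p - x = √p * (1 - t * x + t ^ 2) := by
    rw [ht]; field_simp; ring
  have hkernel x :
      ((p : ℝ) - 1) / (√p + 1 / √p - x) ^ 2 = (1 - t ^ 2) / (1 - t * x + t ^ 2) ^ 2 := by
    rw [hfactor, mul_pow, hsq, ← div_div, ht, inv_pow, hsq]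
    field_simp
  have hpow : (p : ℝ) ^ (-(r : ℝ) / 2) = t ^ r := by
    rw [ht, inv_pow, sqrt_eq_rpow, ← rpow_mul_natCast (by positivity), ← rpow_neg (by positivity)]
    ring_nf
  simp_rw [hkernel, hpow]
  exact integral_chebX_mul_satoTate ht₀ ht₁ r
end

section
/- Let q be a prime and let a, z be nonzero elements of the p-adic field ℚ_q with a + z ≠ 0. Suppose there exist a unit u of ℤ_q and a nonzero integer t such that q^t·u·a + z ≠ 0 and 2·v(q^t·u·a + z) = 2·v(a + z) + t, where v denotes the additive q-adic valuation on ℚ_q (normalized by v(q) = 1). Then t = 2·v(z) − 2·v(a). -/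
/-! Put `b = q^t u a`, so `v(b) = v(a) + t`. By the ultrametric inequality
`v(x + y) ≥ min (v x) (v y)`, with equality when `v x ≠ v y`. If `v(a) = v(z)`, then
`v(b) ≠ v(z)` as `t ≠ 0`, and `v(b + z) = min (v(a) + t) (v(a)) < v(a) + t/2 ≤ v(a + z) + t/2`.
Otherwise `v(a + z) = min (v a) (v z)`, and the relation `v(b + z) = v(a + z) + t/2` forces
`v(b) ≠ v(z)` and then `v(a) + t = 2 v(z) - v(a)`: the shift `t` reflects `v(a)` across `v(z)`. -/

namespace Padic

variable {p : ℕ} [Fact p.Prime]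

lemma valuation_add_eq_min {x y : ℚ_[p]} (hx : x ≠ 0) (hy : y ≠ 0)
    (h : x.valuation ≠ y.valuation) : (x + y).valuation = min x.valuation y.valuation := by
  have hp : 1 < (p : ℝ) := mod_cast (Fact.out : p.Prime).one_lt
  have hnorm : ‖x‖ ≠ ‖y‖ := by
    rw [norm_eq_zpow_neg_valuation hx, norm_eq_zpow_neg_valuation hy]
    exact fun he ↦ h (neg_injective ((zpow_right_strictMono₀ hp).injective he))
  have hsum := IsUltrametricDist.norm_add_eq_max_of_norm_ne_norm hnorm
  have hxy : x + y ≠ 0 := by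
    rw [← norm_pos_iff, hsum]
    exact lt_max_of_lt_left (norm_pos_iff.mpr hx)
  rw [norm_eq_zpow_neg_valuation hxy, norm_eq_zpow_neg_valuation hx,
    norm_eq_zpow_neg_valuation hy, ← (zpow_right_strictMono₀ hp).monotone.map_max,
    max_neg_neg] at hsum
  exact neg_injective ((zpow_right_strictMono₀ hp).injective hsum)

end Padic

lemma PadicInt.valuation_units {p : ℕ} [Fact p.Prime] (u : ℤ_[p]ˣ) :
    (u : ℤ_[p]).valuation = 0 := by
  have h := valuation_mul u.ne_zero u⁻¹.ne_zero
  rw [Units.mul_inv, valuation_one] at h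
  omega

/-- Let `q` be a prime and `a, z` nonzero `q`-adic numbers with `a + z ≠ 0`.
If there is a unit `u` of `ℤ_q` and a nonzero integer `t` with
`q^t u a + z ≠ 0` and `2 v(q^t u a + z) = 2 v(a + z) + t` (the integer form of
`v(q^t u a + z) = v(a + z) + t/2`), then `t = 2 v(z) - 2 v(a)`. -/
theorem padic_valuation_shift (q : ℕ) [Fact q.Prime] (a z : ℚ_[q])
    (ha : a ≠ 0) (hz : z ≠ 0) (haz : a + z ≠ 0) (u : ℤ_[q]ˣ) (t : ℤ) (ht : t ≠ 0)
    (hne : (q : ℚ_[q]) ^ t * ((u : ℤ_[q]) : ℚ_[q]) * a + z ≠ 0)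
    (hval : 2 * ((q : ℚ_[q]) ^ t * ((u : ℤ_[q]) : ℚ_[q]) * a + z).valuation
      = 2 * (a + z).valuation + t) :
    t = 2 * z.valuation - 2 * a.valuation := by
  set b := (q : ℚ_[q]) ^ t * ((u : ℤ_[q]) : ℚ_[q]) * a
  have hq : (q : ℚ_[q]) ≠ 0 := Nat.cast_ne_zero.mpr (Fact.out : q.Prime).ne_zero
  have hu : ((u : ℤ_[q]) : ℚ_[q]) ≠ 0 := PadicInt.coe_ne_zero.mpr u.ne_zero
  have hb : b ≠ 0 := by positivity
  have hvb : b.valuation = t + a.valuation := by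
    rw [Padic.valuation_mul (by positivity) ha, Padic.valuation_mul (by positivity) hu,
      Padic.valuation_zpow, Padic.valuation_p, PadicInt.valuation_coe, PadicInt.valuation_units]
    ring
  have hbz_ge := Padic.le_valuation_add hne
  have hbz_eq (h : b.valuation ≠ z.valuation) := Padic.valuation_add_eq_min hb hz h
  have haz_ge := Padic.le_valuation_add haz
  have haz_eq (h : a.valuation ≠ z.valuation) := Padic.valuation_add_eq_min ha hz h
  omega
end

section
/- Let k ≥ 4 be an even integer, let x be a nonzero real number, and let ε ∈ {1, −1}. Then the integral J = ∫_0^∞ a^{k/2−1} / ((a·x + ε·i)^{k/2} · (a + ε·i)^{k/2}) da (a complex-valued integral over the positive real axis, with i the imaginary unit and the exponents k/2 positive integers) converges absolutely and satisfies |J| ≤ (1/(2|x|)) · B(1/2, k/4 − 1/2), where B(x, y) = Γ(x)Γ(y)/Γ(x+y) is the Beta function. -/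
/-!
Since `‖a + εi‖ ≥ max a 1`, the factor `a^(k/2-1) / (a + εi)^(k/2)` has norm at most `1`, so the
integrand is dominated by `‖a x + εi‖^(-k/2) = (1 + (|x| a)²)^(-k/4)`. After scaling `u = |x| a`,
the substitution `t = (1 + u²)⁻¹` turns `∫₀^∞ (1 + u²)^(-s) du` into `B(s - 1/2, 1/2) / 2`.
-/

open MeasureTheory Complex Set

lemma integral_Ioo_rpow_mul_one_sub_rpow {a b : ℝ} (ha : 0 < a) (hb : 0 < b) :
    ∫ t in Ioo (0 : ℝ) 1, t ^ (a - 1) * (1 - t) ^ (b - 1) =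
      Real.Gamma a * Real.Gamma b / Real.Gamma (a + b) := by
  have h_ofReal : EqOn (fun t : ℝ => (t : ℂ) ^ ((a : ℂ) - 1) * (1 - (t : ℂ)) ^ ((b : ℂ) - 1))
      (fun t : ℝ => ((t ^ (a - 1) * (1 - t) ^ (b - 1) : ℝ) : ℂ)) (Ioo 0 1) := by
    intro t ht
    simp only [ofReal_mul, ofReal_cpow ht.1.le, ofReal_cpow (sub_nonneg.mpr ht.2.le)]
    push_cast
    rfl
  have h_beta : betaIntegral a b =
      ((∫ t in Ioo (0 : ℝ) 1, t ^ (a - 1) * (1 - t) ^ (b - 1) : ℝ) : ℂ) := by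
    rw [betaIntegral, intervalIntegral.integral_of_le zero_le_one, integral_Ioc_eq_integral_Ioo,
      setIntegral_congr_fun measurableSet_Ioo h_ofReal]
    exact integral_ofReal
  have h := Gamma_mul_Gamma_eq_betaIntegral (s := a) (t := b)
    (by simpa using ha) (by simpa using hb)
  rw [h_beta, Gamma_ofReal, Gamma_ofReal, ← ofReal_add, Gamma_ofReal, ← ofReal_mul,
    ← ofReal_mul] at h
  rw [eq_div_iff (Real.Gamma_pos_of_pos (add_pos ha hb)).ne', mul_comm]
  exact (ofReal_injective h).symm

lemma hasDerivAt_inv_one_add_sq (u : ℝ) :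
    HasDerivAt (fun u : ℝ => (1 + u ^ 2)⁻¹) (-(2 * u) / (1 + u ^ 2) ^ 2) u := by
  have h : HasDerivAt (fun u : ℝ => 1 + u ^ 2) (2 * u) u := by
    simpa using (hasDerivAt_pow 2 u).const_add 1
  exact h.inv (by positivity)

lemma injOn_inv_one_add_sq : InjOn (fun u : ℝ => (1 + u ^ 2)⁻¹) (Ioi 0) := by
  intro u hu v hv h
  have : u ^ 2 = v ^ 2 := by simpa using inv_injective h
  exact (pow_left_inj₀ (le_of_lt hu) (le_of_lt hv) two_ne_zero).mp this

lemma image_inv_one_add_sq_Ioi : (fun u : ℝ => (1 + u ^ 2)⁻¹) '' Ioi 0 = Ioo 0 1 := by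
  ext t
  constructor
  · rintro ⟨u, hu, rfl⟩
    exact ⟨by positivity, inv_lt_one_of_one_lt₀ (by nlinarith [mem_Ioi.mp hu])⟩
  · rintro ⟨ht0, ht1⟩
    have ht : 1 < t⁻¹ := (one_lt_inv₀ ht0).mpr ht1
    refine ⟨√(t⁻¹ - 1), Real.sqrt_pos.mpr (by linarith), ?_⟩
    simp [Real.sq_sqrt (by linarith : 0 ≤ t⁻¹ - 1)]

lemma abs_deriv_mul_beta_integrand_inv_one_add_sq {u : ℝ} (hu : 0 < u) (s : ℝ) :
    |-(2 * u) / (1 + u ^ 2) ^ 2| *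
        ((1 + u ^ 2)⁻¹ ^ (s - 1 / 2 - 1) * (1 - (1 + u ^ 2)⁻¹) ^ ((1 / 2 : ℝ) - 1)) =
      2 * (1 + u ^ 2) ^ (-s) := by
  have hP : 0 < 1 + u ^ 2 := by positivity
  have h_sub : 1 - (1 + u ^ 2)⁻¹ = u ^ 2 / (1 + u ^ 2) := by field_simp; ring
  have h_sq : (u ^ 2) ^ ((1 / 2 : ℝ) - 1) = u⁻¹ := by
    rw [← Real.rpow_natCast, ← Real.rpow_mul hu.le]
    norm_num [Real.rpow_neg_one]
  have h_pow : (1 + u ^ 2) ^ (-s) = (1 + u ^ 2) ^ (-(s - 1 / 2 - 1)) /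
      ((1 + u ^ 2) ^ ((2 : ℕ) : ℝ) * (1 + u ^ 2) ^ ((1 / 2 : ℝ) - 1)) := by
    rw [← Real.rpow_add hP, ← Real.rpow_sub hP]
    congr 1
    push_cast
    ring
  rw [h_pow, h_sub, Real.div_rpow (sq_nonneg u) hP.le, h_sq, abs_div, abs_neg,
    abs_of_pos (by positivity), abs_of_pos (by positivity), Real.inv_rpow hP.le,
    ← Real.rpow_neg hP.le, ← Real.rpow_natCast _ 2]
  field_simp

lemma integral_Ioi_one_add_sq_rpow_neg {s : ℝ} (hs : 1 / 2 < s) :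
    ∫ u in Ioi (0 : ℝ), (1 + u ^ 2) ^ (-s) =
      1 / 2 * (Real.Gamma (1 / 2) * Real.Gamma (s - 1 / 2) / Real.Gamma s) := by
  have h := integral_image_eq_integral_abs_deriv_smul measurableSet_Ioi
    (fun u _ => (hasDerivAt_inv_one_add_sq u).hasDerivWithinAt) injOn_inv_one_add_sq
    (fun t => t ^ (s - 1 / 2 - 1) * (1 - t) ^ ((1 / 2 : ℝ) - 1))
  simp only [smul_eq_mul] at h
  rw [image_inv_one_add_sq_Ioi, integral_Ioo_rpow_mul_one_sub_rpow (by linarith) one_half_pos,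
    sub_add_cancel, setIntegral_congr_fun measurableSet_Ioi
      fun u hu => abs_deriv_mul_beta_integrand_inv_one_add_sq hu s, integral_const_mul,
    mul_comm (Real.Gamma _)] at h
  linarith

lemma integrableOn_Ioi_one_add_sq_rpow_neg {s : ℝ} (hs : 1 / 2 < s) :
    IntegrableOn (fun u : ℝ => (1 + u ^ 2) ^ (-s)) (Ioi 0) := by
  have h := integrable_rpow_neg_one_add_norm_sq (E := ℝ) (μ := volume) (r := 2 * s)
    (by rw [Module.finrank_self]; push_cast; linarith)
  rw [neg_div, mul_div_cancel_left₀ _ two_ne_zero] at h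
  simpa only [Real.norm_eq_abs, sq_abs] using h.integrableOn

lemma integrableOn_Ioi_one_add_mul_sq_rpow_neg {c s : ℝ} (hc : 0 < c) (hs : 1 / 2 < s) :
    IntegrableOn (fun a : ℝ => (1 + (c * a) ^ 2) ^ (-s)) (Ioi 0) := by
  simpa using (integrableOn_Ioi_comp_mul_left_iff (fun u : ℝ => (1 + u ^ 2) ^ (-s)) 0 hc).mpr
    (by simpa using integrableOn_Ioi_one_add_sq_rpow_neg hs)

lemma integral_Ioi_one_add_mul_sq_rpow_neg {c s : ℝ} (hc : 0 < c) (hs : 1 / 2 < s) :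
    ∫ a in Ioi (0 : ℝ), (1 + (c * a) ^ 2) ^ (-s) =
      1 / (2 * c) * (Real.Gamma (1 / 2) * Real.Gamma (s - 1 / 2) / Real.Gamma s) := by
  rw [integral_comp_mul_left_Ioi (fun u : ℝ => (1 + u ^ 2) ^ (-s)) 0 hc, mul_zero,
    integral_Ioi_one_add_sq_rpow_neg hs, smul_eq_mul]
  field_simp

section PointwiseBound

variable {ε : ℝ}

lemma norm_ofReal_add_mul_I_pow (hε : ε ^ 2 = 1) (b : ℝ) (m : ℕ) :
    ‖(b : ℂ) + ε * I‖ ^ m = (1 + b ^ 2) ^ ((m : ℝ) / 2) := by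
  rw [norm_add_mul_I, hε, add_comm, Real.sqrt_eq_rpow, ← Real.rpow_natCast,
    ← Real.rpow_mul (by positivity)]
  ring_nf

lemma one_le_norm_ofReal_add_mul_I (hε : ε ^ 2 = 1) (b : ℝ) : 1 ≤ ‖(b : ℂ) + ε * I‖ := by
  have : |ε| = 1 := by rw [← Real.sqrt_sq_eq_abs, hε, Real.sqrt_one]
  simpa [this] using abs_im_le_norm ((b : ℂ) + ε * I)

lemma pow_pred_le_norm_ofReal_add_mul_I_pow (hε : ε ^ 2 = 1) {a : ℝ} (ha : 0 ≤ a) (n : ℕ) :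
    a ^ (n - 1) ≤ ‖(a : ℂ) + ε * I‖ ^ n := by
  have h_re : a ≤ ‖(a : ℂ) + ε * I‖ := by
    simpa [abs_of_nonneg ha] using abs_re_le_norm ((a : ℂ) + ε * I)
  have h_im := one_le_norm_ofReal_add_mul_I hε a
  calc a ^ (n - 1) ≤ ‖(a : ℂ) + ε * I‖ ^ (n - 1) := pow_le_pow_left₀ ha h_re _
    _ ≤ ‖(a : ℂ) + ε * I‖ ^ n := pow_le_pow_right₀ h_im (Nat.sub_le n 1)

lemma norm_pow_pred_div_le (hε : ε ^ 2 = 1) {a : ℝ} (ha : 0 ≤ a) (x : ℝ) (m n : ℕ) :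
    ‖(a : ℂ) ^ (n - 1) / (((a : ℂ) * x + ε * I) ^ m * ((a : ℂ) + ε * I) ^ n)‖ ≤
      (1 + (|x| * a) ^ 2) ^ (-((m : ℝ) / 2)) := by
  have hB : ‖(a : ℂ) + ε * I‖ ≠ 0 := (one_pos.trans_le (one_le_norm_ofReal_add_mul_I hε a)).ne'
  rw [show (a : ℂ) * x = ((a * x : ℝ) : ℂ) by push_cast; rfl, norm_div, norm_mul, norm_pow,
    norm_pow, norm_pow, norm_real, Real.norm_of_nonneg ha]
  calc a ^ (n - 1) / (‖((a * x : ℝ) : ℂ) + ε * I‖ ^ m * ‖(a : ℂ) + ε * I‖ ^ n)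
      ≤ ‖(a : ℂ) + ε * I‖ ^ n / (‖((a * x : ℝ) : ℂ) + ε * I‖ ^ m * ‖(a : ℂ) + ε * I‖ ^ n) := by
        gcongr; exact pow_pred_le_norm_ofReal_add_mul_I_pow hε ha n
    _ = (‖((a * x : ℝ) : ℂ) + ε * I‖ ^ m)⁻¹ := by field_simp
    _ = (1 + (|x| * a) ^ 2) ^ (-((m : ℝ) / 2)) := by
        rw [norm_ofReal_add_mul_I_pow hε, Real.rpow_neg (by positivity), mul_pow, mul_pow,
          sq_abs, mul_comm]

end PointwiseBound

/-- Let `k ≥ 4` be even, `x ≠ 0` real, `ε = ±1`. The integral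
`J = ∫_0^∞ a^{k/2-1} / ((a x + ε i)^{k/2} (a + ε i)^{k/2}) da` converges
absolutely and `|J| ≤ (1/(2|x|)) B(1/2, k/4 - 1/2)`. -/
theorem integral_J_bound (k : ℕ) (hk : 4 ≤ k) (hke : Even k) (x : ℝ) (hx : x ≠ 0)
    (ε : ℝ) (hε : ε = 1 ∨ ε = -1) :
    IntegrableOn (fun a : ℝ => (a : ℂ) ^ (k / 2 - 1) /
        (((a : ℂ) * (x : ℂ) + (ε : ℂ) * I) ^ (k / 2) * ((a : ℂ) + (ε : ℂ) * I) ^ (k / 2)))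
      (Set.Ioi 0) volume ∧
    ‖∫ a in Set.Ioi (0 : ℝ), (a : ℂ) ^ (k / 2 - 1) /
        (((a : ℂ) * (x : ℂ) + (ε : ℂ) * I) ^ (k / 2) * ((a : ℂ) + (ε : ℂ) * I) ^ (k / 2))‖ ≤
      1 / (2 * |x|) *
        (Real.Gamma (1 / 2) * Real.Gamma ((k : ℝ) / 4 - 1 / 2) / Real.Gamma ((k : ℝ) / 4)) := by
  obtain ⟨m, rfl⟩ := hke
  have hk4 : ((m + m : ℕ) : ℝ) / 4 = (m : ℝ) / 2 := by push_cast; ring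
  rw [show (m + m) / 2 = m by omega, hk4]
  have hs : 1 / 2 < (m : ℝ) / 2 := by
    have : (2 : ℝ) ≤ m := by exact_mod_cast (by omega : 2 ≤ m)
    linarith
  have hε2 : ε ^ 2 = 1 := by rcases hε with rfl | rfl <;> norm_num
  have hx' : 0 < |x| := abs_pos.mpr hx
  have hg := integrableOn_Ioi_one_add_mul_sq_rpow_neg hx' hs
  have hbound : ∀ᵐ a : ℝ ∂volume.restrict (Ioi 0),
      ‖(a : ℂ) ^ (m - 1) / (((a : ℂ) * x + ε * I) ^ m * ((a : ℂ) + ε * I) ^ m)‖ ≤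
        (1 + (|x| * a) ^ 2) ^ (-((m : ℝ) / 2)) :=
    ae_restrict_of_forall_mem measurableSet_Ioi fun a ha =>
      norm_pow_pred_div_le hε2 (le_of_lt ha) x m m
  refine ⟨hg.mono' (by fun_prop : Measurable _).aestronglyMeasurable hbound, ?_⟩
  calc _ ≤ _ := norm_integral_le_of_norm_le hg hbound
    _ = _ := integral_Ioi_one_add_mul_sq_rpow_neg hx' hs
end
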